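/- A finite connected simple graph G is isomorphic to BF(T,w) for some finite tree T and edge-weight function w : E(T) → ℕ if and only if G is chordal and every induced 3-cycle (triangle) of G contains a vertex whose degree in G equals 2. -/

import Mathlib

open scoped Classical

noncomputable section

namespace ChauHaMaithani

variable {V : Type*}

/-- The lcm of a finite set of monomials (exponent vectors): pointwise maximum. -/
def mlcm (σ : Finset (V → ℕ)) : V → ℕ := fun v => σ.sup fun g => g v

/-- `m` is a bridge of `σ`: `m ∈ σ` and dropping `m` does not change the lcm. -/
def IsBridge (σ : Finset (V → ℕ)) (m : V → ℕ) : Prop :=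
  m ∈ σ ∧ mlcm (σ.erase m) = mlcm σ

/-- `m` is a gap of `σ`: `m ∉ σ` and adding `m` does not change the lcm. -/
def IsGap (σ : Finset (V → ℕ)) (m : V → ℕ) : Prop :=
  m ∉ σ ∧ mlcm (insert m σ) = mlcm σ

/-- A total order `≻` on monomials is encoded by a ranking function `ord`:
`m ≻ m'` iff `ord m' < ord m` (injectivity on the generating set is assumed separately).
`m` is a true gap of `σ` if it is a gap and every bridge of `σ ∪ {m}` dominated by `m`
is already a bridge of `σ`. -/
def IsTrueGap (ord : (V → ℕ) → ℕ) (σ : Finset (V → ℕ)) (m : V → ℕ) : Prop :=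
  IsGap σ m ∧ ∀ m', IsBridge (insert m σ) m' → ord m' < ord m → IsBridge σ m'

/-- `σ` is type-1: it has a true gap (in `M`) dominating none of its bridges. -/
def Type1 (M : Finset (V → ℕ)) (ord : (V → ℕ) → ℕ) (σ : Finset (V → ℕ)) : Prop :=
  ∃ m ∈ M, IsTrueGap ord σ m ∧ ∀ b, IsBridge σ b → ¬ ord b < ord m

/-- `σ` is potentially-type-2: it has a bridge dominating none of its true gaps. -/
def PotType2 (M : Finset (V → ℕ)) (ord : (V → ℕ) → ℕ) (σ : Finset (V → ℕ)) : Prop :=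
  ∃ b, IsBridge σ b ∧ ∀ m ∈ M, IsTrueGap ord σ m → ¬ ord m < ord b

/-- `b` is the `≻`-smallest bridge of `σ`. -/
def IsSBridge (ord : (V → ℕ) → ℕ) (σ : Finset (V → ℕ)) (b : V → ℕ) : Prop :=
  IsBridge σ b ∧ ∀ b', IsBridge σ b' → ord b ≤ ord b'

/-- `σ` is type-2. -/
def Type2 (M : Finset (V → ℕ)) (ord : (V → ℕ) → ℕ) (σ : Finset (V → ℕ)) : Prop :=
  PotType2 M ord σ ∧
    ∀ σ' : Finset (V → ℕ), σ' ⊆ M → σ' ≠ σ → PotType2 M ord σ' →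
      ∀ b b', IsSBridge ord σ b → IsSBridge ord σ' b' →
        σ'.erase b' = σ.erase b → ord b < ord b'

/-- `M` (the minimal generating set of a monomial ideal) is bridge-friendly w.r.t. `ord`:
every potentially-type-2 subset is type-2. -/
def BridgeFriendlyWrt (M : Finset (V → ℕ)) (ord : (V → ℕ) → ℕ) : Prop :=
  ∀ σ ⊆ M, PotType2 M ord σ → Type2 M ord σ

/-- `M` is bridge-friendly: bridge-friendly w.r.t. some total order on `M`. -/
def BridgeFriendly (M : Finset (V → ℕ)) : Prop :=
  ∃ ord : (V → ℕ) → ℕ, Set.InjOn ord M ∧ BridgeFriendlyWrt M ord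

/-- `σ = {m_1 ≻ ⋯ ≻ m_k} ⊆ M` is Lyubeznik-critical w.r.t. `ord`: there is no `m ∈ M` with
`m_t ≻ m` and `m ∣ lcm(m_1, …, m_t)` for some `1 < t ≤ k`. -/
def LyubCritical (M : Finset (V → ℕ)) (ord : (V → ℕ) → ℕ) (σ : Finset (V → ℕ)) : Prop :=
  σ ⊆ M ∧ ¬ ∃ m ∈ M, ∃ t ∈ σ, (∃ u ∈ σ, ord t < ord u) ∧ ord m < ord t ∧
      ∀ v, m v ≤ mlcm (σ.filter fun g => ord t ≤ ord g) v

/-- `M` is Lyubeznik: for some total order on `M`, no Lyubeznik-critical subset has a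
bridge (equivalently, the associated Lyubeznik resolution is minimal). -/
def IsLyubeznik (M : Finset (V → ℕ)) : Prop :=
  ∃ ord : (V → ℕ) → ℕ, Set.InjOn ord M ∧
    ∀ σ : Finset (V → ℕ), LyubCritical M ord σ → ∀ b, ¬ IsBridge σ b

/-- The quadratic monomial `xy` attached to an edge `e = {x,y}`. -/
def edgeMon (e : Sym2 V) : V → ℕ := fun v => if v ∈ e then 1 else 0

/-- `mingens(I(G))`: the edge monomials of `G`. -/
def edgeGens [Fintype V] (G : SimpleGraph V) : Finset (V → ℕ) :=
  (Finset.univ.filter fun e : Sym2 V => e ∈ G.edgeSet).image edgeMon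

/-- `mingens(I(G)^n)`: the monomials that are products of `n` edges of `G`. -/
def edgePowGens [Fintype V] (G : SimpleGraph V) (n : ℕ) : Finset (V → ℕ) :=
  (Finset.univ.filter fun f : Fin n → Sym2 V => ∀ i, f i ∈ G.edgeSet).image
    fun f => ∑ i, edgeMon (f i)

/-- A graph is chordal if it contains no induced cycle of length at least 4. -/
def Chordal (G : SimpleGraph V) : Prop :=
  ∀ n, 4 ≤ n → IsEmpty (SimpleGraph.cycleGraph n ↪g G)


/-- Vertex type of the graph `L(a,b,c)`: `Sum.inl 0` is `x`, `Sum.inl 1` is `y`,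
and the remaining summands are the leaves `x_i`, the leaves `y_j`, and the
triangle tips `z_k`. -/
abbrev LV (a b c : ℕ) := Fin 2 ⊕ (Fin a ⊕ Fin b ⊕ Fin c)

/-- The graph `L(a,b,c)`: `c` triangles glued along the common edge `{x,y}`, with
`a` leaves attached to `x` and `b` leaves attached to `y`. -/
def LGraph (a b c : ℕ) : SimpleGraph (LV a b c) :=
  SimpleGraph.fromRel fun u v =>
    (u = Sum.inl 0 ∧ v = Sum.inl 1) ∨
    (∃ i, u = Sum.inl 0 ∧ v = Sum.inr (Sum.inl i)) ∨
    (∃ j, u = Sum.inl 1 ∧ v = Sum.inr (Sum.inr (Sum.inl j))) ∨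
    (∃ k, (u = Sum.inl 0 ∨ u = Sum.inl 1) ∧ v = Sum.inr (Sum.inr (Sum.inr k)))

/-- The graph `BF(T,w)`: attach `w(e)` new triangles along each edge `e` of `T`. -/
def BFGraph {VT : Type} (T : SimpleGraph VT) (w : T.edgeSet → ℕ) :
    SimpleGraph (VT ⊕ (Σ e : T.edgeSet, Fin (w e))) :=
  SimpleGraph.fromRel fun u v =>
    (∃ a b, u = Sum.inl a ∧ v = Sum.inl b ∧ T.Adj a b) ∨
    (∃ (a : VT) (e : T.edgeSet) (i : Fin (w e)), u = Sum.inl a ∧ v = Sum.inr ⟨e, i⟩ ∧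
      a ∈ (e : Sym2 VT))

/-- The kite graph: the diamond (`K₄` minus the edge `{2,3}`) together with a pendant
vertex `4` attached to the degree-two vertex `2`. -/
def kite : SimpleGraph (Fin 5) :=
  SimpleGraph.fromEdgeSet {s(0,1), s(0,2), s(0,3), s(1,2), s(1,3), s(2,4)}

/-- The gem graph: the path `0-1-2-3` together with a vertex `4` adjacent to all of
`0,1,2,3`. -/
def gem : SimpleGraph (Fin 5) :=
  SimpleGraph.fromEdgeSet {s(0,1), s(1,2), s(2,3), s(0,4), s(1,4), s(2,4), s(3,4)}

/-- The tadpole graph: the triangle `0,1,2` with a path `0-3-4` of length 2 attached. -/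
def tadpole : SimpleGraph (Fin 5) :=
  SimpleGraph.fromEdgeSet {s(0,1), s(1,2), s(0,2), s(0,3), s(3,4)}

/-- The butterfly graph: two triangles `0,1,2` and `0,3,4` sharing the vertex `0`. -/
def butterfly : SimpleGraph (Fin 5) :=
  SimpleGraph.fromEdgeSet {s(0,1), s(1,2), s(0,2), s(0,3), s(3,4), s(0,4)}

/-- The net graph: the triangle `0,1,2` with pendant vertices `3,4,5` attached to
`0,1,2` respectively. -/
def net : SimpleGraph (Fin 6) :=
  SimpleGraph.fromEdgeSet {s(0,1), s(1,2), s(0,2), s(0,3), s(1,4), s(2,5)}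

/-!
In `BF(T,w)` every added vertex has degree 2 and adjacent neighbours. Such a vertex cannot lie on
an induced cycle of length at least 4, so every such cycle lives in `T`, which has none; and a
triangle avoiding the added vertices would be a triangle of `T`.

Conversely, let `S` be a maximal independent set of degree-2 vertices with adjacent neighbours.
Every triangle meets `S`: a degree-2 vertex of it is in `S` or adjacent to a vertex of `S`, which
is then one of the other two corners. Hence `G - S` is chordal and triangle-free, so a forest (a
shortest path closing a non-bridge edge would be an induced cycle), and it is connected because
each vertex of `S` is bypassed by the edge between its two neighbours. Finally `G ≅ BF(G - S, w)`
where `w e` counts the vertices of `S` sitting on `e`.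
-/

open SimpleGraph

section

variable {V W : Type*} {G : SimpleGraph V} {H : SimpleGraph W}

theorem cycleGraph_adj_iff_val {n : ℕ} (hn : 2 ≤ n) {a b : Fin n} :
    (cycleGraph n).Adj a b ↔
      a.val + 1 = b.val ∨ b.val + 1 = a.val ∨ (a.val = 0 ∧ b.val + 1 = n) ∨
        (b.val = 0 ∧ a.val + 1 = n) := by
  have ha := a.isLt
  have hb := b.isLt
  rw [cycleGraph_adj']
  rcases lt_trichotomy a b with h | rfl | h
  · rw [Fin.coe_sub_iff_lt.2 h, Fin.coe_sub_iff_le.2 h.le]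
    rw [Fin.lt_def] at h
    omega
  · rw [Fin.coe_sub_iff_le.2 le_rfl]
    omega
  · rw [Fin.coe_sub_iff_le.2 h.le, Fin.coe_sub_iff_lt.2 h]
    rw [Fin.lt_def] at h
    omega

open Fin.CommRing in
theorem not_isClique_neighborSet_of_embedding_cycleGraph {n : ℕ} (hn : 4 ≤ n)
    (f : cycleGraph n ↪g G) (i : Fin n) : ¬ G.IsClique (G.neighborSet (f i)) := by
  obtain ⟨k, rfl⟩ : ∃ k, n = k + 2 + 2 := ⟨n - 4, by omega⟩
  have hne : ∀ m : ℕ, 0 < m → m < k + 4 → (m : Fin (k + 2 + 2)) ≠ 0 := by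
    intro m h0 hm h
    rw [Fin.natCast_eq_zero] at h
    exact absurd (Nat.le_of_dvd h0 h) (by omega)
  intro hclique
  have hprev : G.Adj (f i) (f (i - 1)) := f.map_adj_iff.2 (by rw [cycleGraph_adj]; left; ring)
  have hnext : G.Adj (f i) (f (i + 1)) := f.map_adj_iff.2 (by rw [cycleGraph_adj]; right; ring)
  have hdist : f (i - 1) ≠ f (i + 1) := f.injective.ne fun h =>
    hne 2 (by omega) (by omega) (by push_cast; linear_combination -h)
  rcases cycleGraph_adj.1 (f.map_adj_iff.1 (hclique hprev hnext hdist)) with h | h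
  · exact hne 3 (by omega) (by omega) (by push_cast; linear_combination -h)
  · exact hne 1 (by omega) (by omega) (by push_cast; linear_combination h)

theorem Chordal.comap (f : H ↪g G) (hG : Chordal G) : Chordal H :=
  fun n hn => ⟨fun c => (hG n hn).false (f.comp c)⟩

theorem chordal_of_isAcyclic (hG : G.IsAcyclic) : Chordal G :=
  fun n hn => ⟨fun c => isAcyclic_iff_free_cycleGraph.1 hG n (by omega) c.isContained⟩

theorem Chordal.of_embedding_of_isClique_neighborSet (g : H ↪g G) (hH : Chordal H)
    (hsimplicial : ∀ v ∉ Set.range g, G.IsClique (G.neighborSet v)) : Chordal G := by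
  intro n hn
  refine ⟨fun c => ?_⟩
  have hrange : ∀ i, ∃ a, g a = c i := fun i => by
    by_contra h
    exact not_isClique_neighborSet_of_embedding_cycleGraph hn c i (hsimplicial _ h)
  choose c' hc' using hrange
  refine (hH n hn).false ⟨⟨c', fun i j h => c.injective (by rw [← hc', ← hc', h])⟩, ?_⟩
  intro i j
  rw [← g.map_adj_iff]
  exact hc' i ▸ hc' j ▸ c.map_adj_iff

theorem Walk.not_adj_getVert_of_length_eq_dist {u v : V} {p : G.Walk u v}
    (hp : p.length = G.dist u v) {i j : ℕ} (hij : i + 2 ≤ j) (hj : j ≤ p.length) :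
    ¬ G.Adj (p.getVert i) (p.getVert j) := fun h => by
  have := G.dist_le ((p.take i).append (.cons h (p.drop j)))
  simp only [Walk.length_append, Walk.take_length, Walk.length_cons, Walk.drop_length] at this
  omega

theorem nonempty_embedding_cycleGraph_of_dist {x y : V} (hxy : G.Adj x y)
    {p : (G.deleteEdges {s(x, y)}).Walk x y}
    (hp : p.length = (G.deleteEdges {s(x, y)}).dist x y) :
    Nonempty (cycleGraph (p.length + 1) ↪g G) := by
  have hlen : p.length ≠ 0 := fun h => hxy.ne (p.eq_of_length_eq_zero h)
  have hinj : Set.InjOn p.getVert {i | i ≤ p.length} :=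
    (p.isPath_of_length_eq_dist hp).getVert_injOn
  have hdel : ∀ {u v}, (G.deleteEdges {s(x, y)}).Adj u v → G.Adj u v := fun h => h.1
  have hval : ∀ a : Fin (p.length + 1), a.val ≤ p.length := fun a => Nat.lt_succ_iff.1 a.isLt
  refine ⟨⟨⟨fun a => p.getVert a, fun a b h => Fin.ext (hinj (hval a) (hval b) h)⟩, ?_⟩⟩
  intro a b
  change G.Adj (p.getVert a) (p.getVert b) ↔ _
  rw [cycleGraph_adj_iff_val (by omega)]
  constructor
  · intro h
    by_cases he : s(p.getVert a, p.getVert b) = s(x, y)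
    · have h0 : p.getVert 0 = x := p.getVert_zero
      have hl : p.getVert p.length = y := p.getVert_length
      have hpos : ∀ {i j}, p.getVert i = p.getVert j → i ≤ p.length → j ≤ p.length → i = j :=
        fun h hi hj => hinj hi hj h
      rcases Sym2.eq_iff.1 he with ⟨ha, hb⟩ | ⟨ha, hb⟩
      · have := hpos (ha.trans h0.symm) (hval a) (Nat.zero_le _)
        have := hpos (hb.trans hl.symm) (hval b) le_rfl
        omega
      · have := hpos (ha.trans hl.symm) (hval a) le_rfl
        have := hpos (hb.trans h0.symm) (hval b) (Nat.zero_le _)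
        omega
    · have h' : (G.deleteEdges {s(x, y)}).Adj (p.getVert a) (p.getVert b) :=
        (deleteEdges_adj ..).2 ⟨h, he⟩
      have hab : a.val ≠ b.val := fun hab => h.ne (by rw [hab])
      have hab' : ¬ a.val + 2 ≤ b.val := fun hij =>
        Walk.not_adj_getVert_of_length_eq_dist hp hij (hval b) h'
      have hba' : ¬ b.val + 2 ≤ a.val := fun hij =>
        Walk.not_adj_getVert_of_length_eq_dist hp hij (hval a) h'.symm
      omega
  · rintro (h | h | ⟨ha, hb⟩ | ⟨hb, ha⟩)
    · exact h ▸ hdel (p.adj_getVert_succ (by omega))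
    · exact (h ▸ hdel (p.adj_getVert_succ (by omega))).symm
    · rw [ha, show b.val = p.length by omega, p.getVert_zero, p.getVert_length]
      exact hxy
    · rw [hb, show a.val = p.length by omega, p.getVert_zero, p.getVert_length]
      exact hxy.symm

theorem isAcyclic_of_chordal_of_cliqueFree_three (hG : Chordal G) (h3 : G.CliqueFree 3) :
    G.IsAcyclic := by
  refine isAcyclic_iff_forall_adj_isBridge.2 fun x y hxy => isBridge_iff.2 fun hr => ?_
  obtain ⟨p, hp⟩ := hr.exists_walk_length_eq_dist
  have h0 : p.length ≠ 0 := fun h => hxy.ne (p.eq_of_length_eq_zero h)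
  have h1 : p.length ≠ 1 := fun h =>
    ((deleteEdges_adj ..).1 (Walk.adj_of_length_eq_one h)).2 rfl
  obtain ⟨c⟩ := nonempty_embedding_cycleGraph_of_dist hxy hp
  rcases (by omega : p.length = 2 ∨ 3 ≤ p.length) with h | h
  · rw [h, cycleGraph_three_eq_top] at c
    exact (cliqueFree_iff.1 h3).false c.toCopy
  · exact (hG _ (by omega)).false c

theorem _root_.SimpleGraph.Iso.ncard_neighborSet (φ : G ≃g H) (v : V) :
    (H.neighborSet (φ v)).ncard = (G.neighborSet v).ncard := by
  rw [← Nat.card_coe_set_eq, ← Nat.card_coe_set_eq]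
  exact Nat.card_congr (φ.mapNeighborSet v).symm

theorem neighborSet_eq_pair_of_ncard_eq_two [Finite V] {x y z : V} (hxy : G.Adj x y)
    (hxz : G.Adj x z) (hyz : y ≠ z) (h2 : (G.neighborSet x).ncard = 2) :
    G.neighborSet x = {y, z} :=
  (Set.eq_of_subset_of_ncard_le (by rintro _ (rfl | rfl) <;> assumption)
    (by rw [h2, Set.ncard_pair hyz]) (Set.toFinite _)).symm

end

section BFGraph

variable {VT : Type} {T : SimpleGraph VT} {w : T.edgeSet → ℕ}

@[simp]
theorem bfGraph_adj_inl_inl {a b : VT} :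
    (BFGraph T w).Adj (.inl a) (.inl b) ↔ T.Adj a b := by
  rw [BFGraph, fromRel_adj]
  constructor
  · rintro ⟨-, (⟨_, _, ⟨⟩, ⟨⟩, h⟩ | ⟨_, _, _, -, ⟨⟩, -⟩) |
      (⟨_, _, ⟨⟩, ⟨⟩, h⟩ | ⟨_, _, _, -, ⟨⟩, -⟩)⟩
    exacts [h, h.symm]
  · exact fun h => ⟨fun hab => h.ne (Sum.inl_injective hab), .inl (.inl ⟨a, b, rfl, rfl, h⟩)⟩

@[simp]
theorem bfGraph_adj_inl_inr {a : VT} {e : T.edgeSet} {i : Fin (w e)} :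
    (BFGraph T w).Adj (.inl a) (.inr ⟨e, i⟩) ↔ a ∈ (e : Sym2 VT) := by
  rw [BFGraph, fromRel_adj]
  constructor
  · rintro ⟨-, (⟨_, _, -, ⟨⟩, -⟩ | ⟨_, _, _, ⟨⟩, ⟨⟩, h⟩) | (⟨_, _, ⟨⟩, -⟩ | ⟨_, _, _, ⟨⟩, -⟩)⟩
    exact h
  · exact fun h => ⟨Sum.inl_ne_inr, .inl (.inr ⟨a, e, i, rfl, rfl, h⟩)⟩

@[simp]
theorem bfGraph_adj_inr_inl {a : VT} {e : T.edgeSet} {i : Fin (w e)} :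
    (BFGraph T w).Adj (.inr ⟨e, i⟩) (.inl a) ↔ a ∈ (e : Sym2 VT) := by
  rw [adj_comm, bfGraph_adj_inl_inr]

@[simp]
theorem bfGraph_not_adj_inr_inr {p q : Σ e : T.edgeSet, Fin (w e)} :
    ¬ (BFGraph T w).Adj (.inr p) (.inr q) := by
  simp [BFGraph]

theorem bfGraph_neighborSet_inr (e : T.edgeSet) (i : Fin (w e)) :
    (BFGraph T w).neighborSet (.inr ⟨e, i⟩) = Sum.inl '' ((e : Sym2 VT).toFinset : Set VT) := by
  ext (a | q) <;> simp

theorem isClique_neighborSet_bfGraph_inr (e : T.edgeSet) (i : Fin (w e)) :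
    (BFGraph T w).IsClique ((BFGraph T w).neighborSet (.inr ⟨e, i⟩)) := by
  rw [bfGraph_neighborSet_inr]
  rintro _ ⟨a, ha, rfl⟩ _ ⟨b, hb, rfl⟩ hab
  rw [Finset.mem_coe, Sym2.mem_toFinset] at ha hb
  rw [bfGraph_adj_inl_inl, ← T.mem_edgeSet,
    ← (Sym2.mem_and_mem_iff fun h => hab (congrArg _ h)).1 ⟨ha, hb⟩]
  exact e.2

theorem ncard_neighborSet_bfGraph_inr (e : T.edgeSet) (i : Fin (w e)) :
    ((BFGraph T w).neighborSet (.inr ⟨e, i⟩)).ncard = 2 := by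
  rw [bfGraph_neighborSet_inr, Set.ncard_image_of_injective _ Sum.inl_injective,
    Set.ncard_coe_finset, Sym2.card_toFinset_of_not_isDiag _ (T.not_isDiag_of_mem_edgeSet e.2)]

theorem chordal_bfGraph (hT : T.IsAcyclic) : Chordal (BFGraph T w) :=
  (chordal_of_isAcyclic hT).of_embedding_of_isClique_neighborSet
    ⟨⟨Sum.inl, Sum.inl_injective⟩, bfGraph_adj_inl_inl⟩ <| by
    rintro (a | ⟨e, i⟩) h
    · exact absurd ⟨a, rfl⟩ h
    · exact isClique_neighborSet_bfGraph_inr e i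

theorem bfGraph_ncard_neighborSet_eq_two_of_triangle (hT : T.IsAcyclic)
    {x y z : VT ⊕ Σ e : T.edgeSet, Fin (w e)} (hxy : (BFGraph T w).Adj x y)
    (hyz : (BFGraph T w).Adj y z) (hxz : (BFGraph T w).Adj x z) :
    ((BFGraph T w).neighborSet x).ncard = 2 ∨ ((BFGraph T w).neighborSet y).ncard = 2 ∨
      ((BFGraph T w).neighborSet z).ncard = 2 := by
  rcases x with a | ⟨e, i⟩
  swap; · exact .inl (ncard_neighborSet_bfGraph_inr e i)
  rcases y with b | ⟨e, i⟩
  swap; · exact .inr (.inl (ncard_neighborSet_bfGraph_inr e i))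
  rcases z with c | ⟨e, i⟩
  swap; · exact .inr (.inr (ncard_neighborSet_bfGraph_inr e i))
  rw [bfGraph_adj_inl_inl] at hxy hyz hxz
  exact absurd (is3Clique_triple_iff.2 ⟨hxy, hxz, hyz⟩) (hT.cliqueFree le_rfl _)

end BFGraph

def IsTipOver (G : SimpleGraph V) (K : Set V) (v : V) : Prop :=
  ∃ a ∈ K, ∃ b ∈ K, G.Adj a b ∧ G.neighborSet v = {a, b}

section Tips

variable {V : Type} {G : SimpleGraph V} {K : Set V}

theorem exists_iso_bfGraph_induce [Finite V] (hK : ∀ v ∉ K, IsTipOver G K v) :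
    ∃ w : (G.induce K).edgeSet → ℕ, Nonempty (G ≃g BFGraph (G.induce K) w) := by
  choose a ha b hb hab hN using hK
  let E : ↥Kᶜ → (G.induce K).edgeSet := fun v =>
    ⟨s(⟨a v v.2, ha v v.2⟩, ⟨b v v.2, hb v v.2⟩), hab v v.2⟩
  have hE : ∀ (k : K) (e) (v : {v // E v = e}), G.Adj v.1 k ↔ k ∈ (e : Sym2 K) := by
    rintro k _ ⟨v, rfl⟩
    rw [← mem_neighborSet, hN _ v.2]
    simp [E, Subtype.ext_iff]
  have hindep : ∀ u v : ↥Kᶜ, ¬ G.Adj u v := by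
    intro u v huv
    rw [← mem_neighborSet, hN _ u.2] at huv
    rcases huv with h | h
    exacts [v.2 (h ▸ ha u u.2), v.2 (h ▸ hb u u.2)]
  let ψ : (K ⊕ Σ e, Fin (Nat.card {v // E v = e})) ≃ V :=
    (Equiv.sumCongr (Equiv.refl K) ((Equiv.sigmaCongrRight fun e => (Finite.equivFin _).symm).trans
      (Equiv.sigmaFiberEquiv E))).trans (Equiv.Set.sumCompl K)
  refine ⟨_, ⟨(⟨ψ, ?_⟩ : BFGraph _ _ ≃g G).symm⟩⟩
  rintro (k | ⟨e, i⟩) (k' | ⟨e', i'⟩)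
  · simp [ψ]
  · rw [bfGraph_adj_inl_inr, G.adj_comm]
    exact hE k e' _
  · rw [bfGraph_adj_inr_inl]
    exact hE k' e _
  · simpa [ψ] using hindep _ _

theorem connected_induce_of_isTipOver (hG : G.Connected) (hK : ∀ v ∉ K, IsTipOver G K v) :
    (G.induce K).Connected := by
  choose a ha b hb hab hN using hK
  let r : V → K := fun v => if h : v ∈ K then ⟨v, h⟩ else ⟨a v h, ha v h⟩
  have hr_tip : ∀ u v, G.Adj u v → (hv : v ∉ K) → (G.induce K).Reachable (r u) (r v) := by
    intro u v huv hv
    rw [adj_comm, ← mem_neighborSet, hN v hv] at huv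
    rcases huv with rfl | rfl
    · simp [r, ha v hv, hv]
    · have hba : (G.induce K).Adj ⟨b v hv, hb v hv⟩ ⟨a v hv, ha v hv⟩ := (hab v hv).symm
      simpa [r, hb v hv, hv] using hba.reachable
  have hr : ∀ u v, G.Adj u v → (G.induce K).Reachable (r u) (r v) := by
    intro u v huv
    by_cases hv : v ∈ K
    · by_cases hu : u ∈ K
      · simpa [r, hu, hv] using (show (G.induce K).Adj ⟨u, hu⟩ ⟨v, hv⟩ from huv).reachable
      · exact (hr_tip v u huv.symm hu).symm
    · exact hr_tip u v huv hv
  have hreach : ∀ u v, G.Reachable u v → (G.induce K).Reachable (r u) (r v) := by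
    intro u v
    simp only [reachable_iff_reflTransGen]
    exact fun h => Relation.ReflTransGen.lift' r
      (fun u v huv => (reachable_iff_reflTransGen _ _).1 (hr u v huv)) u v h
  obtain ⟨v⟩ := hG.nonempty
  exact (connected_iff _).2
    ⟨fun k k' => by simpa [r] using hreach k k' (hG.preconnected k k'), ⟨r v⟩⟩

theorem exists_isTipOver_cliqueFree_induce [Finite V]
    (htri : ∀ x y z, G.Adj x y → G.Adj y z → G.Adj x z →
      (G.neighborSet x).ncard = 2 ∨ (G.neighborSet y).ncard = 2 ∨
        (G.neighborSet z).ncard = 2) :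
    ∃ K : Set V, (∀ v ∉ K, IsTipOver G K v) ∧ (G.induce K).CliqueFree 3 := by
  obtain ⟨S, ⟨hSC, hSind⟩, hSmax⟩ :=
    (Set.toFinite {S : Set V | S ⊆ {v | IsTipOver G .univ v} ∧ G.IsIndepSet S}).exists_maximal
      ⟨∅, Set.empty_subset _, Set.pairwise_empty _⟩
  have hmeet : ∀ x y z, G.Adj y x → G.Adj y z → G.Adj x z → (G.neighborSet y).ncard = 2 →
      x ∈ S ∨ y ∈ S ∨ z ∈ S := by
    intro x y z hyx hyz hxz h2
    have hN := neighborSet_eq_pair_of_ncard_eq_two hyx hyz hxz.ne h2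
    by_contra! h
    refine h.2.1 (hSmax ⟨Set.insert_subset ⟨x, trivial, z, trivial, hxz, hN⟩ hSC, ?_⟩
      (Set.subset_insert _ _) (Set.mem_insert _ _))
    have hyS : ∀ s ∈ S, ¬ G.Adj y s := fun s hs hys => by
      rw [← mem_neighborSet, hN] at hys
      rcases hys with rfl | rfl
      exacts [h.1 hs, h.2.2 hs]
    exact Set.pairwise_insert.2 ⟨hSind, fun s hs _ => ⟨hyS s hs, fun h => hyS s hs h.symm⟩⟩
  refine ⟨Sᶜ, fun v hv => ?_, fun t ht => ?_⟩
  · rw [Set.notMem_compl_iff] at hv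
    obtain ⟨a, -, b, -, hab, hN⟩ := hSC hv
    have hnbr : ∀ u ∈ G.neighborSet v, u ∈ Sᶜ := fun u hu hu' => hSind hv hu' (G.ne_of_adj hu) hu
    exact ⟨a, hnbr a (by simp [hN]), b, hnbr b (by simp [hN]), hab, hN⟩
  · obtain ⟨x, y, z, hxy, hxz, hyz, rfl⟩ := is3Clique_iff.1 ht
    have hx : (x : V) ∉ S := x.2
    have hy : (y : V) ∉ S := y.2
    have hz : (z : V) ∉ S := z.2
    rcases htri x y z hxy hyz hxz with h | h | h
    · have := hmeet y x z hxy hxz hyz h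
      tauto
    · have := hmeet x y z hxy.symm hyz hxz h
      tauto
    · have := hmeet x z y hxz.symm hyz.symm hxy h
      tauto

end Tips

/-- **Proposition 4.7.** A finite connected simple graph `G` is isomorphic to `BF(T,w)`
for some finite tree `T` and edge-weight `w : E(T) → ℕ` iff `G` is chordal and every
triangle of `G` has a vertex of degree 2. -/
theorem isoBF_iff_chordal_triangle_degree_two {V : Type} [Fintype V] (G : SimpleGraph V)
    (hconn : G.Connected) :
    (∃ (VT : Type) (_ : Fintype VT) (T : SimpleGraph VT) (_ : T.IsTree)
        (w : T.edgeSet → ℕ), Nonempty (G ≃g BFGraph T w)) ↔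
      (Chordal G ∧ ∀ x y z : V, G.Adj x y → G.Adj y z → G.Adj x z →
        (G.neighborSet x).ncard = 2 ∨ (G.neighborSet y).ncard = 2 ∨
          (G.neighborSet z).ncard = 2) := by
  constructor
  · rintro ⟨VT, _, T, hT, w, ⟨φ⟩⟩
    refine ⟨(chordal_bfGraph hT.isAcyclic).comap φ.toEmbedding, fun x y z hxy hyz hxz => ?_⟩
    simpa only [φ.ncard_neighborSet] using
      bfGraph_ncard_neighborSet_eq_two_of_triangle hT.isAcyclic
        (φ.map_adj_iff.2 hxy) (φ.map_adj_iff.2 hyz) (φ.map_adj_iff.2 hxz)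
  · rintro ⟨hchord, htri⟩
    obtain ⟨K, hK, hK3⟩ := exists_isTipOver_cliqueFree_induce htri
    obtain ⟨w, hw⟩ := exists_iso_bfGraph_induce hK
    have hT : (G.induce K).IsTree :=
      ⟨connected_induce_of_isTipOver hconn hK,
        isAcyclic_of_chordal_of_cliqueFree_three (hchord.comap (Embedding.induce K)) hK3⟩
    exact ⟨K, inferInstance, G.induce K, hT, w, hw⟩

end ChauHaMaithani
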